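/- arXiv:2205.05948 — 4 statements merged into one kernel-verified Lean document; each statement's English description precedes it below -/
import Mathlib

section
/- Every increasing function φ : {1,…,N} → {1,…,N} with φ ≥ Id arises as φ_x for some ordered configuration x_1 ≤ x_2 ≤ ⋯ ≤ x_N in ℝ^N; i.e., the map x ↦ φ_x from ordered configurations to Φ_N is surjective. -/
/-- Least `k` with `ψ k > n` (with fallback `n+1`). -/
private def phiK (ψ : ℕ → ℕ) (n : ℕ) : ℕ :=
  Nat.find (p := fun k => n < ψ k ∨ k = n + 1) ⟨n + 1, Or.inr rfl⟩

private lemma phiK_le (ψ : ℕ → ℕ) (n : ℕ) : phiK ψ n ≤ n + 1 :=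
  Nat.find_le (Or.inr rfl)

private lemma phiK_spec (ψ : ℕ → ℕ) (n : ℕ) (h : phiK ψ n ≤ n) :
    n < ψ (phiK ψ n) := by
  unfold phiK at h ⊢
  rcases Nat.find_spec (p := fun k => n < ψ k ∨ k = n + 1) ⟨n + 1, Or.inr rfl⟩ with h1 | h2
  · exact h1
  · omega

private lemma phiK_min (ψ : ℕ → ℕ) (n k : ℕ) (hk : k < phiK ψ n) : ψ k ≤ n := by
  unfold phiK at hk
  have := Nat.find_min (p := fun k => n < ψ k ∨ k = n + 1) ⟨n + 1, Or.inr rfl⟩ hk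
  push_neg at this
  omega

private lemma le_phiK (ψ : ℕ → ℕ) {n j : ℕ} (h : ∀ k < j, ψ k ≤ n ∧ k ≠ n + 1) :
    j ≤ phiK ψ n := by
  rw [phiK, Nat.le_find_iff]
  intro i hi
  have := h i hi
  push_neg
  omega

private lemma phiK_mono (ψ : ℕ → ℕ) {m n : ℕ} (hmn : m ≤ n) :
    phiK ψ m ≤ phiK ψ n := by
  apply le_phiK
  intro k hk
  have h1 : ψ k ≤ m := phiK_min ψ m k hk
  have h2 : k < m + 1 := lt_of_lt_of_le hk (phiK_le ψ m)
  exact ⟨le_trans h1 hmn, by omega⟩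

private lemma phiK_le_of (ψ : ℕ → ℕ) {n k : ℕ} (h : n < ψ k) : phiK ψ n ≤ k :=
  Nat.find_le (Or.inl h)

private noncomputable def yseq (ε : ℝ) (ψ : ℕ → ℕ) : ℕ → ℝ
  | 0 => 0
  | n + 1 =>
    if h : phiK ψ n ≤ n then
      yseq ε ψ (phiK ψ n) + ε * (1 - (2 : ℝ)⁻¹ ^ (n + 1))
    else
      yseq ε ψ n + 2 * ε
decreasing_by
  · exact Nat.lt_succ_of_le h
  · exact Nat.lt_succ_self n

private lemma yseq_gap (ε : ℝ) (hε : 0 < ε) (ψ : ℕ → ℕ) :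
    ∀ n, yseq ε ψ n + ε * (2 : ℝ)⁻¹ ^ (n + 1) ≤ yseq ε ψ (n + 1) := by
  intro n
  induction n using Nat.strong_induction_on with
  | _ n IH =>
  have hstep : ∀ m, m < n → yseq ε ψ m ≤ yseq ε ψ (m + 1) := by
    intro m hm
    have := IH m hm
    nlinarith [pow_pos (by norm_num : (0:ℝ) < 2⁻¹) (m + 1)]
  have hmono : ∀ a b : ℕ, a ≤ b → b ≤ n → yseq ε ψ a ≤ yseq ε ψ b := by
    intro a b hab hbn
    induction b with
    | zero => simp_all
    | succ b ih =>
      rcases Nat.lt_or_ge a (b + 1) with h | h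
      · exact le_trans (ih (Nat.lt_succ_iff.mp h) (by omega)) (hstep b (by omega))
      · have : a = b + 1 := le_antisymm hab h
        simp [this]
  rw [yseq]
  split
  · rename_i h
    -- goal: yseq n + ε * 2⁻¹^(n+1) ≤ yseq (phiK ψ n) + ε * (1 - 2⁻¹^(n+1))
    have key : yseq ε ψ n ≤ yseq ε ψ (phiK ψ n) + ε * (1 - (2:ℝ)⁻¹ ^ n) := by
      match n, h with
      | 0, h =>
        have h0 : phiK ψ 0 = 0 := Nat.le_zero.mp h
        simp [h0]
      | (m + 1), h =>
        rw [yseq]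
        split
        · rename_i h'
          have hjk : phiK ψ m ≤ phiK ψ (m + 1) := phiK_mono ψ (Nat.le_succ m)
          have := hmono (phiK ψ m) (phiK ψ (m + 1)) hjk h
          linarith
        · rename_i h'
          have h1 : phiK ψ m = m + 1 := by
            have := phiK_le ψ m; omega
          have h2 : phiK ψ (m + 1) = m + 1 := by
            have := phiK_mono ψ (show m ≤ m + 1 by omega); omega
          rw [h2, yseq, dif_neg h']
          have hp : (0:ℝ) ≤ 1 - (2:ℝ)⁻¹ ^ (m + 1) := by
            have : (2:ℝ)⁻¹ ^ (m + 1) ≤ 1 := pow_le_one₀ (by norm_num) (by norm_num)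
            linarith
          nlinarith
    have hpow : (2:ℝ)⁻¹ ^ n = 2 * (2:ℝ)⁻¹ ^ (n + 1) := by ring
    nlinarith
  · rename_i h
    have hp : (2:ℝ)⁻¹ ^ (n + 1) ≤ 1 := pow_le_one₀ (by norm_num) (by norm_num)
    nlinarith

private lemma yseq_mono (ε : ℝ) (hε : 0 < ε) (ψ : ℕ → ℕ) : Monotone (yseq ε ψ) := by
  apply monotone_nat_of_le_succ
  intro n
  have := yseq_gap ε hε ψ n
  nlinarith [pow_pos (by norm_num : (0:ℝ) < 2⁻¹) (n + 1)]

/-- Membership: `y (ψ m) ≤ y m + ε`. -/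
private lemma yseq_mem (ε : ℝ) (hε : 0 < ε) (ψ : ℕ → ℕ) (hψ : ∀ n, n ≤ ψ n) (m : ℕ) :
    yseq ε ψ (ψ m) ≤ yseq ε ψ m + ε := by
  rcases Nat.eq_or_lt_of_le (hψ m) with heq | hlt
  · rw [← heq]; linarith
  · obtain ⟨n, hn⟩ : ∃ n, ψ m = n + 1 := ⟨ψ m - 1, by omega⟩
    have hmn : m ≤ n := by omega
    have hK : phiK ψ n ≤ m := phiK_le_of ψ (by omega)
    have hKn : phiK ψ n ≤ n := le_trans hK hmn
    rw [hn, yseq, dif_pos hKn]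
    have h1 : yseq ε ψ (phiK ψ n) ≤ yseq ε ψ m := yseq_mono ε hε ψ hK
    have h2 : (0:ℝ) ≤ (2:ℝ)⁻¹ ^ (n + 1) := by positivity
    nlinarith

/-- Upper bound: `y (ψ m + 1) > y m + ε`. -/
private lemma yseq_ub (ε : ℝ) (hε : 0 < ε) (ψ : ℕ → ℕ) (hψ : ∀ n, n ≤ ψ n)
    (hψm : Monotone ψ) (m : ℕ) :
    yseq ε ψ m + ε < yseq ε ψ (ψ m + 1) := by
  set p := ψ m with hp
  have hmp : m ≤ p := hψ m
  have hKlb : m + 1 ≤ phiK ψ p := by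
    apply le_phiK
    intro k hk
    constructor
    · exact le_trans (hψm (by omega : k ≤ m)) le_rfl
    · omega
  rw [yseq]
  split
  · rename_i h
    have hmlt : m < p := by omega
    have h1 : yseq ε ψ (m + 1) ≤ yseq ε ψ (phiK ψ p) := yseq_mono ε hε ψ hKlb
    have h2 := yseq_gap ε hε ψ m
    have h3 : (2:ℝ)⁻¹ ^ (p + 1) < (2:ℝ)⁻¹ ^ (m + 1) := by
      apply pow_lt_pow_right_of_lt_one₀ (by norm_num) (by norm_num)
      omega
    nlinarith
  · rename_i h
    have h1 : yseq ε ψ m ≤ yseq ε ψ p := yseq_mono ε hε ψ hmp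
    linarith

/-- Every monotone nondecreasing `φ : Fin N → Fin N` with `φ ≥ id` arises as
`φ_x` for some ordered configuration `x` (for any fixed `ε > 0`):
the map `x ↦ φ_x` is surjective onto `Φ_N`. -/
theorem phi_x_surjective (N : ℕ) (ε : ℝ) (hε : 0 < ε)
    (φ : Fin N → Fin N) (hmono : Monotone φ) (hid : ∀ n, n ≤ φ n) :
    ∃ x : Fin N → ℝ, Monotone x ∧
      ∀ m : Fin N, IsGreatest {n : Fin N | m ≤ n ∧ x n ≤ x m + ε} (φ m) := by
  set ψ : ℕ → ℕ := fun n => if h : n < N then (φ ⟨n, h⟩ : ℕ) else n with hψdef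
  have hψid : ∀ n, n ≤ ψ n := by
    intro n
    simp only [hψdef]
    split
    · rename_i h
      exact hid ⟨n, h⟩
    · exact le_rfl
  have hψmono : Monotone ψ := by
    intro a b hab
    simp only [hψdef]
    split <;> split
    · rename_i ha hb
      exact hmono (show (⟨a, ha⟩ : Fin N) ≤ ⟨b, hb⟩ from hab)
    · rename_i ha hb
      have : (φ ⟨a, ha⟩ : ℕ) < N := (φ ⟨a, ha⟩).isLt
      omega
    · rename_i ha hb
      omega
    · exact hab
  have hψeq : ∀ m : Fin N, ψ (m : ℕ) = (φ m : ℕ) := by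
    intro m
    simp only [hψdef, dif_pos m.isLt]
  refine ⟨fun i => yseq ε ψ i, ?_, ?_⟩
  · intro a b hab
    exact yseq_mono ε hε ψ (by exact_mod_cast hab)
  · intro m
    constructor
    · refine ⟨hid m, ?_⟩
      have := yseq_mem ε hε ψ hψid (m : ℕ)
      rw [hψeq m] at this
      exact this
    · rintro n ⟨hmn, hxn⟩
      by_contra hcon
      push_neg at hcon
      have hlt : (φ m : ℕ) < (n : ℕ) := hcon
      have h1 : ψ (m : ℕ) + 1 ≤ (n : ℕ) := by rw [hψeq m]; omega
      have h2 := yseq_ub ε hε ψ hψid hψmono (m : ℕ)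
      have h3 : yseq ε ψ (ψ (m : ℕ) + 1) ≤ yseq ε ψ (n : ℕ) := yseq_mono ε hε ψ h1
      simp only [Set.mem_setOf_eq] at hxn
      linarith
end

section
/- For every typical real vector x_1 < x_2 < ⋯ < x_N (all pairwise differences distinct), there exists an integer vector q_1 < q_2 < ⋯ < q_N inducing the same strict ordering of differences: (x_{n+k} − x_n) > (x_{m+ℓ} − x_m) implies (q_{n+k} − q_n) > (q_{m+ℓ} − q_m) for all valid index pairs. In particular every equivalence class of typical vectors contains a Golomb ruler. -/
/-- Every typical real vector (strictly increasing with pairwise distinct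
differences) is combinatorially equivalent to a Golomb ruler: there is an
integer vector, strictly increasing and with pairwise distinct differences,
inducing the same strict ordering on differences. -/
theorem typical_vector_has_golomb_ruler (N : ℕ) (x : Fin N → ℝ)
    (hmono : StrictMono x)
    (hdist : ∀ m n m' n' : Fin N, m < n → m' < n' →
      x n - x m = x n' - x m' → (m, n) = (m', n')) :
    ∃ q : Fin N → ℤ, StrictMono q ∧
      (∀ m n m' n' : Fin N, m < n → m' < n' →
        q n - q m = q n' - q m' → (m, n) = (m', n')) ∧
      (∀ m n m' n' : Fin N, m < n → m' < n' →
        x n' - x m' < x n - x m → q n' - q m' < q n - q m) := by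
  classical
  obtain ⟨M₁, hM₁⟩ := Finite.exists_le (fun p : Fin N × Fin N =>
    if x p.1 < x p.2 then 2 / (x p.2 - x p.1) else (0 : ℝ))
  obtain ⟨M₂, hM₂⟩ := Finite.exists_le (fun p : (Fin N × Fin N) × (Fin N × Fin N) =>
    if x p.2.2 - x p.2.1 < x p.1.2 - x p.1.1 then
      2 / ((x p.1.2 - x p.1.1) - (x p.2.2 - x p.2.1)) else (0 : ℝ))
  set L : ℝ := max M₁ M₂ + 1 with hLdef
  have hL1 : ∀ m n : Fin N, m < n → 2 < L * (x n - x m) := by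
    intro m n hmn
    have hd : 0 < x n - x m := sub_pos.mpr (hmono hmn)
    have h := hM₁ (m, n)
    simp only [if_pos (hmono hmn)] at h
    have : 2 / (x n - x m) < L := lt_of_le_of_lt (h.trans (le_max_left _ _)) (by linarith)
    calc 2 = (2 / (x n - x m)) * (x n - x m) := by field_simp
    _ < L * (x n - x m) := by exact mul_lt_mul_of_pos_right this hd
  have hL2 : ∀ m n m' n' : Fin N, x n' - x m' < x n - x m →
      2 < L * ((x n - x m) - (x n' - x m')) := by
    intro m n m' n' hlt
    have hd : 0 < (x n - x m) - (x n' - x m') := sub_pos.mpr hlt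
    have h := hM₂ ((m, n), (m', n'))
    simp only [if_pos hlt] at h
    have : 2 / ((x n - x m) - (x n' - x m')) < L :=
      lt_of_le_of_lt (h.trans (le_max_right _ _)) (by linarith)
    calc 2 = (2 / ((x n - x m) - (x n' - x m'))) * ((x n - x m) - (x n' - x m')) := by
          field_simp
    _ < L * ((x n - x m) - (x n' - x m')) := mul_lt_mul_of_pos_right this hd
  refine ⟨fun i => ⌈L * x i⌉, ?_, ?_, ?_⟩
  · intro m n hmn
    have h1 : L * x n ≤ (⌈L * x n⌉ : ℝ) := Int.le_ceil _
    have h2 : (⌈L * x m⌉ : ℝ) < L * x m + 1 := Int.ceil_lt_add_one _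
    have := hL1 m n hmn
    have : (⌈L * x m⌉ : ℝ) < (⌈L * x n⌉ : ℝ) := by linarith
    exact_mod_cast this
  · intro m n m' n' hmn hm'n' heq
    rcases lt_trichotomy (x n - x m) (x n' - x m') with h | h | h
    · have h1 : L * x n' ≤ (⌈L * x n'⌉ : ℝ) := Int.le_ceil _
      have h2 : (⌈L * x m'⌉ : ℝ) < L * x m' + 1 := Int.ceil_lt_add_one _
      have h3 : L * x m ≤ (⌈L * x m⌉ : ℝ) := Int.le_ceil _
      have h4 : (⌈L * x n⌉ : ℝ) < L * x n + 1 := Int.ceil_lt_add_one _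
      have h5 := hL2 m' n' m n h
      have heq' : (⌈L * x n⌉ : ℝ) - ⌈L * x m⌉ = (⌈L * x n'⌉ : ℝ) - ⌈L * x m'⌉ := by
        exact_mod_cast congrArg (fun z : ℤ => (z : ℝ)) heq
      nlinarith [mul_sub L (x n') (x m'), mul_sub L (x n) (x m)]
    · exact hdist m n m' n' hmn hm'n' h
    · have h1 : L * x n ≤ (⌈L * x n⌉ : ℝ) := Int.le_ceil _
      have h2 : (⌈L * x m⌉ : ℝ) < L * x m + 1 := Int.ceil_lt_add_one _
      have h3 : L * x m' ≤ (⌈L * x m'⌉ : ℝ) := Int.le_ceil _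
      have h4 : (⌈L * x n'⌉ : ℝ) < L * x n' + 1 := Int.ceil_lt_add_one _
      have h5 := hL2 m n m' n' h
      have heq' : (⌈L * x n⌉ : ℝ) - ⌈L * x m⌉ = (⌈L * x n'⌉ : ℝ) - ⌈L * x m'⌉ := by
        exact_mod_cast congrArg (fun z : ℤ => (z : ℝ)) heq
      nlinarith
  · intro m n m' n' hmn hm'n' hlt
    have h1 : L * x n ≤ (⌈L * x n⌉ : ℝ) := Int.le_ceil _
    have h2 : (⌈L * x m⌉ : ℝ) < L * x m + 1 := Int.ceil_lt_add_one _
    have h3 : L * x m' ≤ (⌈L * x m'⌉ : ℝ) := Int.le_ceil _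
    have h4 : (⌈L * x n'⌉ : ℝ) < L * x n' + 1 := Int.ceil_lt_add_one _
    have h5 := hL2 m n m' n' hlt
    have : (⌈L * x n'⌉ : ℝ) - ⌈L * x m'⌉ < (⌈L * x n⌉ : ℝ) - ⌈L * x m⌉ := by nlinarith
    exact_mod_cast this
end

section
/- The set Φ_{N,N} of pairs (α, ω) of monotone nondecreasing functions {1,…,N} → {0,1,…,N+1} with im(α) ⊆ [1, N+1], im(ω) ⊆ [0, N], and α(n) ≤ ω(n) + 1 for all n, has cardinality equal to the Narayana-type number T(2N+1, N+1) = (1/(2N+1))·binomial(2N+1, N+1)·binomial(2N+1, N). -/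
/-!
Shifting `α` down by one turns `Φ_{N,N}` into the pairs `a ≤ w` of monotone maps
`Fin N → [0, N]`. A monotone map `a` is the lattice path of length `2N` with up-steps at the
positions `a j + j`, and `a ≤ w` says that the path of `w` never rises above the path of `a`.
By the reflection principle (exchange the tails of a violating pair after the last time the
second path is one step above the first) the violating pairs correspond to the pairs of paths
with `N - 1` and `N + 1` up-steps. Hence the count is `C(2N,N)² - C(2N,N-1)·C(2N,N+1)`, and
`(2N+1)` times this is `C(2N+1,N+1)·C(2N+1,N)`.
-/

open Finset

lemma StrictMono.add_sub_le {N : ℕ} {f : Fin N → ℕ} (hf : StrictMono f) {i j : Fin N}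
    (hij : i ≤ j) : f i + (j - i) ≤ f j := by
  have := card_le_card_of_injOn f (s := Icc i j) (t := Icc (f i) (f j))
    (fun k hk => by
      simp only [coe_Icc, Set.mem_Icc] at hk ⊢
      exact ⟨hf.monotone hk.1, hf.monotone hk.2⟩) hf.injective.injOn
  simp only [Fin.card_Icc, Nat.card_Icc] at this
  omega

namespace LatticePath

/-- A lattice path is encoded by the set of positions of its up-steps; `height S k` is the
number of up-steps among the first `k` steps. -/
def height (S : Finset ℕ) (k : ℕ) : ℕ := #{i ∈ S | i < k}

lemma height_zero (S : Finset ℕ) : height S 0 = 0 := by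
  simp [height]

lemma height_mono (S : Finset ℕ) : Monotone (height S) := fun _ _ hkl =>
  card_le_card <| monotone_filter_right S fun _ _ hi => hi.trans_le hkl

lemma height_succ_le (S : Finset ℕ) (k : ℕ) : height S (k + 1) ≤ height S k + 1 := by
  refine (card_le_card fun i hi => ?_).trans (card_insert_le k _)
  simp only [mem_filter, mem_insert] at hi ⊢
  grind

lemma height_of_subset_range {S : Finset ℕ} {n k : ℕ} (hS : S ⊆ range n) (hk : n ≤ k) :
    height S k = #S := by
  rw [height, filter_true_of_mem fun i hi => (mem_range.1 (hS hi)).trans_le hk]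

lemma height_add_card_Ico (S : Finset ℕ) {m k : ℕ} (hmk : m ≤ k) :
    height S m + #{i ∈ S | m ≤ i ∧ i < k} = height S k := by
  rw [height, height, ← card_union_of_disjoint (disjoint_filter.2 fun _ _ h h' => by omega)]
  congr 1
  ext i
  simp only [mem_union, mem_filter]
  grind

lemma exists_height_eq_add_one {S T : Finset ℕ} {k : ℕ} (h : height S k < height T k) :
    ∃ j ≤ k, height T j = height S j + 1 := by
  induction k with
  | zero => simp [height_zero] at h
  | succ k ih =>
    by_cases hk : height S k < height T k
    · obtain ⟨j, hjk, hj⟩ := ih hk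
      exact ⟨j, hjk.trans k.le_succ, hj⟩
    · have := height_succ_le T k
      have := height_mono S (Nat.le_add_right k 1)
      exact ⟨k + 1, le_rfl, by omega⟩

def tailSwap (S T : Finset ℕ) (m : ℕ) : Finset ℕ := {i ∈ S | i < m} ∪ {i ∈ T | m ≤ i}

lemma tailSwap_tailSwap (S T : Finset ℕ) (m : ℕ) :
    tailSwap (tailSwap S T m) (tailSwap T S m) m = S := by
  ext i
  simp only [tailSwap, mem_union, mem_filter]
  by_cases i < m <;> grind

lemma tailSwap_subset_range {S T : Finset ℕ} {n : ℕ} (hS : S ⊆ range n) (hT : T ⊆ range n)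
    (m : ℕ) : tailSwap S T m ⊆ range n :=
  union_subset ((filter_subset _ _).trans hS) ((filter_subset _ _).trans hT)

lemma height_tailSwap_of_le (S T : Finset ℕ) {m k : ℕ} (hkm : k ≤ m) :
    height (tailSwap S T m) k = height S k := by
  unfold height tailSwap
  congr 1
  ext i
  simp only [mem_filter, mem_union]
  grind

lemma height_tailSwap_add (S T : Finset ℕ) {m k : ℕ} (hmk : m ≤ k) :
    height (tailSwap S T m) k + height T m = height S m + height T k := by
  rw [← height_add_card_Ico T hmk, ← height_add_card_Ico _ hmk,
    height_tailSwap_of_le S T le_rfl]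
  have : {i ∈ tailSwap S T m | m ≤ i ∧ i < k} = {i ∈ T | m ≤ i ∧ i < k} := by
    ext i
    simp only [tailSwap, mem_filter, mem_union]
    grind
  rw [this]
  ring

def lastTouch (n : ℕ) (p : Finset ℕ × Finset ℕ) : ℕ :=
  Nat.findGreatest (fun k => height p.2 k = height p.1 k + 1) n

def reflect (n : ℕ) (p : Finset ℕ × Finset ℕ) : Finset ℕ × Finset ℕ :=
  (tailSwap p.1 p.2 (lastTouch n p), tailSwap p.2 p.1 (lastTouch n p))

lemma height_lastTouch {p : Finset ℕ × Finset ℕ} {n k : ℕ} (hkn : k ≤ n)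
    (h : height p.1 k < height p.2 k) :
    height p.2 (lastTouch n p) = height p.1 (lastTouch n p) + 1 := by
  obtain ⟨j, hjk, hj⟩ := exists_height_eq_add_one h
  exact Nat.findGreatest_spec (P := fun k => height p.2 k = height p.1 k + 1) (hjk.trans hkn) hj

/-- Beyond `m`, the swap reflects the height difference of the two paths about `1`. -/
lemma touch_tailSwap_iff {S T : Finset ℕ} {m : ℕ} (hm : height T m = height S m + 1) (k : ℕ) :
    height (tailSwap T S m) k = height (tailSwap S T m) k + 1 ↔ height T k = height S k + 1 := by
  rcases le_total k m with hkm | hmk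
  · rw [height_tailSwap_of_le _ _ hkm, height_tailSwap_of_le _ _ hkm]
  · have := height_tailSwap_add S T hmk
    have := height_tailSwap_add T S hmk
    omega

lemma lastTouch_reflect {p : Finset ℕ × Finset ℕ} {n : ℕ}
    (h : height p.2 (lastTouch n p) = height p.1 (lastTouch n p) + 1) :
    lastTouch n (reflect n p) = lastTouch n p := by
  simp only [lastTouch, reflect] at h ⊢
  simp only [touch_tailSwap_iff h]

lemma reflect_reflect {p : Finset ℕ × Finset ℕ} {n : ℕ}
    (h : height p.2 (lastTouch n p) = height p.1 (lastTouch n p) + 1) :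
    reflect n (reflect n p) = p := by
  rw [reflect, lastTouch_reflect h]
  exact Prod.ext (tailSwap_tailSwap p.1 p.2 _) (tailSwap_tailSwap p.2 p.1 _)

lemma height_reflect_lastTouch {p : Finset ℕ × Finset ℕ} {n : ℕ}
    (h : height p.2 (lastTouch n p) = height p.1 (lastTouch n p) + 1) :
    height (reflect n p).2 (lastTouch n p) = height (reflect n p).1 (lastTouch n p) + 1 := by
  rwa [reflect, height_tailSwap_of_le _ _ le_rfl, height_tailSwap_of_le _ _ le_rfl]

def pathPairs (n a b : ℕ) : Finset (Finset ℕ × Finset ℕ) :=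
  powersetCard a (range n) ×ˢ powersetCard b (range n)

lemma card_pathPairs (n a b : ℕ) : #(pathPairs n a b) = n.choose a * n.choose b := by
  simp [pathPairs, card_product, card_powersetCard]

lemma reflect_mem_pathPairs {p : Finset ℕ × Finset ℕ} {n a b : ℕ}
    (hp : p ∈ pathPairs n a (b + 1))
    (h : height p.2 (lastTouch n p) = height p.1 (lastTouch n p) + 1) :
    reflect n p ∈ pathPairs n b (a + 1) := by
  simp only [reflect, pathPairs, mem_product, mem_powersetCard] at hp ⊢
  obtain ⟨⟨hS, hSa⟩, hT, hTb⟩ := hp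
  have hK : lastTouch n p ≤ n := Nat.findGreatest_le n
  have h₁ := height_tailSwap_add p.1 p.2 hK
  have h₂ := height_tailSwap_add p.2 p.1 hK
  have hS' := tailSwap_subset_range hS hT (lastTouch n p)
  have hT' := tailSwap_subset_range hT hS (lastTouch n p)
  rw [height_of_subset_range hT le_rfl, height_of_subset_range hS' le_rfl] at h₁
  rw [height_of_subset_range hS le_rfl, height_of_subset_range hT' le_rfl] at h₂
  exact ⟨⟨hS', by omega⟩, hT', by omega⟩

open scoped Classical in
noncomputable def dominatingPairs (n N : ℕ) : Finset (Finset ℕ × Finset ℕ) :=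
  {p ∈ pathPairs n N N | ∀ k, height p.2 k ≤ height p.1 k}

open scoped Classical in
lemma card_filter_not_dominating (n N : ℕ) :
    #{p ∈ pathPairs n (N + 1) (N + 1) | ¬ ∀ k, height p.2 k ≤ height p.1 k} =
      #(pathPairs n N (N + 2)) := by
  have touch_of_bad : ∀ p ∈ pathPairs n (N + 1) (N + 1),
      (¬ ∀ k, height p.2 k ≤ height p.1 k) →
      height p.2 (lastTouch n p) = height p.1 (lastTouch n p) + 1 := by
    intro p hp hbad
    simp only [pathPairs, mem_product, mem_powersetCard] at hp
    simp only [not_forall, not_le] at hbad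
    obtain ⟨k, hk⟩ := hbad
    refine height_lastTouch (k := k) ?_ hk
    by_contra! hnk
    rw [height_of_subset_range hp.1.1 hnk.le, height_of_subset_range hp.2.1 hnk.le] at hk
    omega
  have touch_of_target : ∀ p ∈ pathPairs n N (N + 2),
      height p.2 (lastTouch n p) = height p.1 (lastTouch n p) + 1 := by
    intro p hp
    simp only [pathPairs, mem_product, mem_powersetCard] at hp
    refine height_lastTouch (k := n) le_rfl ?_
    rw [height_of_subset_range hp.1.1 le_rfl, height_of_subset_range hp.2.1 le_rfl]
    omega
  refine card_nbij' (reflect n) (reflect n) ?_ ?_ ?_ ?_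
  · intro p hp
    rw [coe_filter] at hp
    exact reflect_mem_pathPairs hp.1 (touch_of_bad p hp.1 hp.2)
  · intro p hp
    have htouch := touch_of_target p hp
    rw [coe_filter]
    refine ⟨reflect_mem_pathPairs hp htouch, fun hdom => ?_⟩
    have := hdom (lastTouch n p)
    rw [height_reflect_lastTouch htouch] at this
    omega
  · intro p hp
    rw [coe_filter] at hp
    exact reflect_reflect (touch_of_bad p hp.1 hp.2)
  · intro p hp
    exact reflect_reflect (touch_of_target p hp)

lemma card_dominatingPairs_add (n N : ℕ) :
    #(dominatingPairs n (N + 1)) + n.choose N * n.choose (N + 2) = n.choose (N + 1) ^ 2 := by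
  rw [dominatingPairs, ← card_pathPairs, ← card_filter_not_dominating,
    card_filter_add_card_filter_not, card_pathPairs, sq]

section MonotoneEncoding

variable {N M : ℕ}

/-- A monotone `a : Fin N → ℕ` is the lattice path whose `j`-th up-step comes after `a j`
right-steps, i.e. at position `a j + j`. -/
def upSteps (a : Fin N → ℕ) : Finset ℕ := univ.image fun j => a j + j

lemma strictMono_add_val {a : Fin N → ℕ} (ha : Monotone a) :
    StrictMono fun j => a j + (j : ℕ) :=
  ha.add_strictMono Fin.val_strictMono

lemma height_upSteps {a : Fin N → ℕ} (ha : Monotone a) (k : ℕ) :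
    height (upSteps a) k = #{j | a j + j < k} := by
  rw [height, upSteps, filter_image, card_image_of_injective _ (strictMono_add_val ha).injective]

lemma upSteps_mem_powersetCard {a : Fin N → ℕ} (ha : Monotone a) (hM : ∀ j, a j ≤ M) :
    upSteps a ∈ powersetCard N (range (N + M)) := by
  refine mem_powersetCard.2 ⟨fun i hi => ?_, ?_⟩
  · obtain ⟨j, -, rfl⟩ := mem_image.1 hi
    have := hM j
    simp only [mem_range]
    omega
  · rw [upSteps, card_image_of_injective _ (strictMono_add_val ha).injective, card_univ,
      Fintype.card_fin]

lemma eq_of_upSteps_eq {a b : Fin N → ℕ} (ha : Monotone a) (hb : Monotone b)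
    (h : upSteps a = upSteps b) : a = b := by
  have hrange : Set.range (fun j => a j + (j : ℕ)) = Set.range fun j => b j + (j : ℕ) := by
    simpa [upSteps, ← coe_inj] using h
  have := ((strictMono_add_val ha).range_inj (strictMono_add_val hb)).1 hrange
  funext j
  simpa using congrFun this j

lemma exists_upSteps_eq {S : Finset ℕ} (hS : S ∈ powersetCard N (range (N + M))) :
    ∃ a : Fin N → ℕ, Monotone a ∧ (∀ j, a j ≤ M) ∧ upSteps a = S := by
  obtain ⟨hSr, hSN⟩ := mem_powersetCard.1 hS
  set e := S.orderEmbOfFin hSN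
  have he : StrictMono fun j => e j := e.strictMono
  have hlt (j : Fin N) : e j < N + M := mem_range.1 (hSr (S.orderEmbOfFin_mem hSN j))
  have hlow (j : Fin N) : (j : ℕ) ≤ e j := by
    have := he.add_sub_le (i := ⟨0, j.pos⟩) (j := j) (Nat.zero_le _)
    simp only at this
    omega
  have hupp (j : Fin N) : e j + (N - 1 - j) < N + M := by
    have hj := j.isLt
    let last : Fin N := ⟨N - 1, by omega⟩
    have := he.add_sub_le (show j ≤ last from Nat.le_sub_one_of_lt hj)
    have := hlt last
    simp only [last] at *
    omega
  refine ⟨fun j => e j - j, fun i j hij => ?_, fun j => ?_, ?_⟩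
  · have := he.add_sub_le hij
    have := hlow i
    rw [Fin.le_def] at hij
    dsimp only
    omega
  · have := hupp j
    dsimp only
    omega
  · have : (fun j => e j - (j : ℕ) + j) = e := funext fun j => Nat.sub_add_cancel (hlow j)
    rw [upSteps, this, image_orderEmbOfFin_univ]

lemma forall_le_iff_height_upSteps_le {a w : Fin N → ℕ} (ha : Monotone a) (hw : Monotone w) :
    (∀ j, a j ≤ w j) ↔ ∀ k, height (upSteps w) k ≤ height (upSteps a) k := by
  simp only [height_upSteps ha, height_upSteps hw]
  refine ⟨fun h k => card_le_card (monotone_filter_right _ fun j _ hj => ?_), fun h j => ?_⟩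
  · have := h j
    omega
  · have hw' := (Tuple.lt_card_lt_iff_apply_lt_of_monotone (strictMono_add_val hw).monotone
      (j := j) (a := w j + j + 1)).2 (Nat.lt_succ_self _)
    have ha' := (Tuple.lt_card_lt_iff_apply_lt_of_monotone (strictMono_add_val ha).monotone
      (j := j) (a := w j + j + 1)).1 (hw'.trans_le (h _))
    omega

end MonotoneEncoding

lemma card_monotonePairs_eq_card_dominatingPairs (N M : ℕ) :
    Nat.card {q : (Fin N → ℕ) × (Fin N → ℕ) //
      Monotone q.1 ∧ Monotone q.2 ∧ (∀ j, q.2 j ≤ M) ∧ ∀ j, q.1 j ≤ q.2 j} =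
      #(dominatingPairs (N + M) N) := by
  rw [← Nat.card_eq_finsetCard]
  refine Nat.card_congr
    (Equiv.ofBijective (fun q => ⟨(upSteps q.1.1, upSteps q.1.2), ?_⟩) ⟨?_, ?_⟩)
  · obtain ⟨⟨a, w⟩, ha, hw, hwM, haw⟩ := q
    simp only [dominatingPairs, pathPairs, mem_filter, mem_product]
    exact ⟨⟨upSteps_mem_powersetCard ha fun j => (haw j).trans (hwM j),
      upSteps_mem_powersetCard hw hwM⟩, (forall_le_iff_height_upSteps_le ha hw).1 haw⟩
  · rintro ⟨⟨a, w⟩, ha, hw, _⟩ ⟨⟨a', w'⟩, ha', hw', _⟩ h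
    simp only [Subtype.mk.injEq, Prod.mk.injEq] at h ⊢
    exact ⟨eq_of_upSteps_eq ha ha' h.1, eq_of_upSteps_eq hw hw' h.2⟩
  · rintro ⟨⟨S, T⟩, hST⟩
    simp only [dominatingPairs, pathPairs, mem_filter, mem_product] at hST
    obtain ⟨⟨hS, hT⟩, hdom⟩ := hST
    obtain ⟨a, ha, -, rfl⟩ := exists_upSteps_eq hS
    obtain ⟨w, hw, hwM, rfl⟩ := exists_upSteps_eq hT
    exact ⟨⟨(a, w), ha, hw, hwM, (forall_le_iff_height_upSteps_le ha hw).2 hdom⟩, rfl⟩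

lemma two_mul_add_one_mul_card_dominatingPairs (N : ℕ) :
    (2 * N + 1) * #(dominatingPairs (N + N) N) =
      (2 * N + 1).choose (N + 1) * (2 * N + 1).choose N := by
  rcases N with _ | M
  · simp [dominatingPairs, pathPairs, filter_singleton]
  · set n := M + 1 + (M + 1) with hn
    have hgood := card_dominatingPairs_add n M
    have hsymm : n.choose (M + 2) = n.choose M := Nat.choose_symm_of_eq_add (by omega)
    have hkey := Nat.choose_succ_right_eq n M
    rw [show n - M = M + 2 by omega] at hkey
    rw [show 2 * (M + 1) + 1 = n + 1 by omega, Nat.choose_succ_succ n (M + 1),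
      Nat.choose_succ_succ n M, hsymm]
    rw [hsymm] at hgood
    zify at *
    linear_combination (2 * (M + 1 : ℤ) + 1) * hgood
      + 2 * (n.choose (M + 1) + n.choose M : ℤ) * hkey + #(dominatingPairs n (M + 1)) * hn

end LatticePath

open LatticePath

def phiEquivMonotonePairs (N : ℕ) :
    {p : (Fin N → Fin (N + 2)) × (Fin N → Fin (N + 2)) //
        (∀ a b, a ≤ b → p.1 a ≤ p.1 b) ∧ (∀ a b, a ≤ b → p.2 a ≤ p.2 b) ∧
        (∀ n, 1 ≤ (p.1 n : ℕ)) ∧ (∀ n, (p.2 n : ℕ) ≤ N) ∧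
        (∀ n, (p.1 n : ℕ) ≤ (p.2 n : ℕ) + 1)} ≃
      {q : (Fin N → ℕ) × (Fin N → ℕ) //
        Monotone q.1 ∧ Monotone q.2 ∧ (∀ j, q.2 j ≤ N) ∧ ∀ j, q.1 j ≤ q.2 j} where
  toFun p := ⟨(fun j => p.1.1 j - 1, fun j => p.1.2 j),
    fun _ _ hij => Nat.sub_le_sub_right (p.2.1 _ _ hij) 1, fun _ _ hij => p.2.2.1 _ _ hij,
    p.2.2.2.2.1, fun j => Nat.sub_le_of_le_add (p.2.2.2.2.2 j)⟩
  invFun q := ⟨(fun j => ⟨q.1.1 j + 1, by have := q.2.2.2.2 j; have := q.2.2.2.1 j; omega⟩,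
      fun j => ⟨q.1.2 j, by have := q.2.2.2.1 j; omega⟩),
    fun _ _ hij => Nat.succ_le_succ (q.2.1 hij), fun _ _ hij => q.2.2.1 hij,
    fun _ => Nat.le_add_left 1 _, q.2.2.2.1, fun j => Nat.succ_le_succ (q.2.2.2.2 j)⟩
  left_inv p := by
    ext j
    · have := p.2.2.2.1 j
      simp only
      omega
    · rfl
  right_inv q := by
    ext j <;> simp

/-- The number of pairs `(α, ω)` of monotone nondecreasing functions
`{1,…,N} → {0,…,N+1}` with `im α ⊆ [1, N+1]`, `im ω ⊆ [0, N]` and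
`α ≤ ω + 1` is the Narayana-type number
`T(2N+1, N+1) = (1/(2N+1))·C(2N+1, N+1)·C(2N+1, N)`. -/
theorem card_PhiNN (N : ℕ) :
    Nat.card {p : (Fin N → Fin (N + 2)) × (Fin N → Fin (N + 2)) //
        (∀ a b, a ≤ b → p.1 a ≤ p.1 b) ∧ (∀ a b, a ≤ b → p.2 a ≤ p.2 b) ∧
        (∀ n, 1 ≤ (p.1 n : ℕ)) ∧ (∀ n, (p.2 n : ℕ) ≤ N) ∧
        (∀ n, (p.1 n : ℕ) ≤ (p.2 n : ℕ) + 1)}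
      = Nat.choose (2 * N + 1) (N + 1) * Nat.choose (2 * N + 1) N / (2 * N + 1) := by
  rw [Nat.card_congr (phiEquivMonotonePairs N), card_monotonePairs_eq_card_dominatingPairs,
    ← two_mul_add_one_mul_card_dominatingPairs, Nat.mul_div_cancel_left _ (Nat.succ_pos _)]
end

section
/- The number of pairs (α, ω) ∈ Φ_{N,N} whose associated parallelo-polyomino (with border functions L(1)=0, L(n)=α(n−1)−1 for 2 ≤ n ≤ N+1; U(n)=ω(n)+1 for 1 ≤ n ≤ N, U(N+1)=N+1) has area Σ_{n=1}^{N+1}(U(n) − L(n)) equal to 2N+1 is binomial(2N, N). -/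
/-- The lower border function of the parallelo-polyomino associated to `α`:
`L(1) = 0` and `L(n) = α(n−1) − 1` for `2 ≤ n ≤ N+1` (here `0`-indexed on `Fin (N+1)`). -/
def lowerBorder {N : ℕ} (α : Fin N → Fin (N + 2)) (n : Fin (N + 1)) : ℕ :=
  if h : (n : ℕ) = 0 then 0
  else (α ⟨(n : ℕ) - 1, by have := n.isLt; omega⟩ : ℕ) - 1

/-- The upper border function of the parallelo-polyomino associated to `ω`:
`U(n) = ω(n) + 1` for `1 ≤ n ≤ N` and `U(N+1) = N+1`. -/
def upperBorder {N : ℕ} (ω : Fin N → Fin (N + 2)) (n : Fin (N + 1)) : ℕ :=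
  if h : (n : ℕ) < N then (ω ⟨(n : ℕ), h⟩ : ℕ) + 1 else N + 1

lemma area_char {N : ℕ} (α ω : Fin N → Fin (N + 2))
    (hω : ∀ a b, a ≤ b → ω a ≤ ω b)
    (h1 : ∀ n, 1 ≤ (α n : ℕ)) (h3 : ∀ n, (α n : ℕ) ≤ (ω n : ℕ) + 1) :
    ((∑ n : Fin (N + 1), (upperBorder ω n - lowerBorder α n)) = 2 * N + 1)
      ↔ ∀ n, (α n : ℕ) = (ω n : ℕ) + 1 := by
  have hLU : ∀ n : Fin (N + 1), lowerBorder α n ≤ upperBorder ω n := by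
    intro n
    unfold lowerBorder upperBorder
    rcases Nat.eq_zero_or_pos (n : ℕ) with h0 | h0
    · rw [dif_pos h0]; omega
    · rw [dif_neg (by omega)]
      by_cases hn : (n : ℕ) < N
      · rw [dif_pos hn]
        have hh := h3 ⟨(n : ℕ) - 1, by omega⟩
        have hmm := hω ⟨(n : ℕ) - 1, by omega⟩ ⟨(n : ℕ), hn⟩ (Fin.mk_le_mk.mpr (by omega))
        rw [Fin.le_def] at hmm
        omega
      · rw [dif_neg hn]
        have := (α ⟨(n : ℕ) - 1, by have := n.isLt; omega⟩).isLt
        omega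
  rw [Finset.sum_tsub_distrib _ (fun n _ => hLU n)]
  have hU : ∑ n : Fin (N + 1), upperBorder ω n = (∑ i : Fin N, (ω i : ℕ)) + N + (N + 1) := by
    rw [Fin.sum_univ_castSucc]
    have hc : ∀ i : Fin N, upperBorder ω (Fin.castSucc i) = (ω i : ℕ) + 1 := by
      intro i
      unfold upperBorder
      rw [dif_pos (show ((Fin.castSucc i : Fin (N+1)) : ℕ) < N by simpa using i.isLt)]
      simp
    have hl : upperBorder ω (Fin.last N) = N + 1 := by
      unfold upperBorder
      rw [dif_neg (by simp)]
    rw [hl, Finset.sum_congr rfl (fun i _ => hc i), Finset.sum_add_distrib,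
      Finset.sum_const, Finset.card_univ, Fintype.card_fin, smul_eq_mul, mul_one]
  have hL : ∑ n : Fin (N + 1), lowerBorder α n = ∑ i : Fin N, ((α i : ℕ) - 1) := by
    rw [Fin.sum_univ_succ]
    have h0 : lowerBorder α 0 = 0 := by unfold lowerBorder; rw [dif_pos (by simp)]
    have hs : ∀ i : Fin N, lowerBorder α (Fin.succ i) = (α i : ℕ) - 1 := by
      intro i
      unfold lowerBorder
      rw [dif_neg (by simp)]
      simp
    rw [h0, Finset.sum_congr rfl (fun i _ => hs i), zero_add]
  rw [hU, hL]
  have hle : ∑ i : Fin N, ((α i : ℕ) - 1) ≤ ∑ i : Fin N, (ω i : ℕ) :=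
    Finset.sum_le_sum fun i _ => by have := h3 i; omega
  constructor
  · intro h
    have hsum : ∑ i : Fin N, ((α i : ℕ) - 1) = ∑ i : Fin N, (ω i : ℕ) := by omega
    have := (Finset.sum_eq_sum_iff_of_le (fun i (_ : i ∈ Finset.univ) => by
      have := h3 i; omega : ∀ i ∈ Finset.univ, ((α i : ℕ) - 1) ≤ (ω i : ℕ))).mp hsum
    intro n
    have := this n (Finset.mem_univ n)
    have := h1 n
    omega
  · intro h
    have hsum : ∑ i : Fin N, ((α i : ℕ) - 1) = ∑ i : Fin N, (ω i : ℕ) :=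
      Finset.sum_congr rfl fun i _ => by have := h i; omega
    omega


lemma gap_nat {N : ℕ} {f : ℕ → ℕ} (hf : ∀ a b, a < b → b < N → f a < f b) :
    ∀ b, b < N → ∀ a, a ≤ b → f a + (b - a) ≤ f b := by
  intro b
  induction b with
  | zero => intro _ a ha; interval_cases a; simp
  | succ b ih =>
    intro hb a ha
    rcases eq_or_lt_of_le ha with rfl | h
    · simp
    · have h1 := ih (by omega) a (by omega)
      have h2 := hf b (b + 1) (by omega) hb
      omega

lemma gap_emb {N : ℕ} (g : Fin N ↪o Fin (2 * N)) {i j : Fin N} (h : i ≤ j) :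
    (g i : ℕ) + ((j : ℕ) - (i : ℕ)) ≤ (g j : ℕ) := by
  have hmono : ∀ a b, a < b → b < N →
      (fun k => if h : k < N then (g ⟨k, h⟩ : ℕ) else 0) a
        < (fun k => if h : k < N then (g ⟨k, h⟩ : ℕ) else 0) b := by
    intro a b hab hb
    simp only
    rw [dif_pos (lt_trans hab hb), dif_pos hb]
    exact g.strictMono (Fin.mk_lt_mk.mpr hab)
  have := gap_nat hmono (j : ℕ) j.isLt (i : ℕ) (Fin.le_def.mp h)
  simpa [dif_pos i.isLt, dif_pos j.isLt] using this

lemma emb_lb {N : ℕ} (g : Fin N ↪o Fin (2 * N)) (i : Fin N) : (i : ℕ) ≤ (g i : ℕ) := by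
  have h0 : (⟨0, i.pos⟩ : Fin N) ≤ i := Fin.mk_le_mk.mpr (Nat.zero_le _)
  have h := gap_emb g h0
  have hv : ((⟨0, i.pos⟩ : Fin N) : ℕ) = 0 := rfl
  omega

lemma emb_ub {N : ℕ} (g : Fin N ↪o Fin (2 * N)) (i : Fin N) : (g i : ℕ) ≤ N + (i : ℕ) := by
  have hi := i.isLt
  have hij : i ≤ (⟨N - 1, by omega⟩ : Fin N) := Fin.le_def.mpr (by simp; omega)
  have h := gap_emb g hij
  have h2 := (g ⟨N - 1, by omega⟩).isLt
  have hv : ((⟨N - 1, by omega⟩ : Fin N) : ℕ) = N - 1 := rfl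
  omega

lemma strictmono_aux {N : ℕ} (f : Fin N → Fin (N + 1)) (hf : Monotone f)
    (F : Fin N → Fin (2 * N)) (hF : ∀ i, (F i : ℕ) = (f i : ℕ) + (i : ℕ)) :
    StrictMono F := by
  intro a b hab
  have := hf hab.le
  rw [Fin.le_def] at this
  rw [Fin.lt_def] at hab ⊢
  rw [hF, hF]
  omega

lemma card_image_aux {N : ℕ} (f : Fin N → Fin (N + 1)) (hf : Monotone f)
    (F : Fin N → Fin (2 * N)) (hF : ∀ i, (F i : ℕ) = (f i : ℕ) + (i : ℕ)) :
    (Finset.univ.image F).card = N := by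
  rw [Finset.card_image_of_injective _ (strictmono_aux f hf F hF).injective,
    Finset.card_univ, Fintype.card_fin]


lemma image_eq_aux {N : ℕ} (s : Finset (Fin (2 * N))) (hs : s.card = N)
    (F : Fin N → Fin (2 * N))
    (hF : ∀ i, (F i : ℕ) = ((s.orderEmbOfFin hs i : ℕ) - (i : ℕ)) + (i : ℕ)) :
    Finset.univ.image F = s := by
  have hFg : F = ⇑(s.orderEmbOfFin hs) := funext fun i => Fin.ext (by
    rw [hF]; have := emb_lb (s.orderEmbOfFin hs) i; omega)
  rw [hFg]
  apply Finset.coe_injective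
  rw [Finset.coe_image, Finset.coe_univ, Set.image_univ]
  exact Finset.range_orderEmbOfFin s hs

lemma card_monotone_fin (N : ℕ) :
    Nat.card {f : Fin N → Fin (N + 1) // Monotone f} = Nat.choose (2 * N) N := by
  rw [Nat.card_eq_fintype_card]
  have e : {f : Fin N → Fin (N + 1) // Monotone f} ≃ {s : Finset (Fin (2 * N)) // s.card = N} :=
    { toFun := fun f => ⟨Finset.univ.image
        (fun i : Fin N => (⟨(f.1 i : ℕ) + (i : ℕ), by
          have := (f.1 i).isLt; have := i.isLt; omega⟩ : Fin (2 * N))),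
        card_image_aux f.1 f.2 _ (fun i => rfl)⟩
      invFun := fun s => ⟨fun i => ⟨(s.1.orderEmbOfFin s.2 i : ℕ) - (i : ℕ), by
          have h1 := emb_ub (s.1.orderEmbOfFin s.2) i; omega⟩, by
        intro a b hab
        have h1 := gap_emb (s.1.orderEmbOfFin s.2) hab
        have h2 := emb_lb (s.1.orderEmbOfFin s.2) a
        have h3 := Fin.le_def.mp hab
        rw [Fin.le_def]
        show (s.1.orderEmbOfFin s.2 a : ℕ) - (a : ℕ) ≤ (s.1.orderEmbOfFin s.2 b : ℕ) - (b : ℕ)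
        omega⟩
      left_inv := fun f => by
        apply Subtype.ext
        funext i
        have hcard : (Finset.univ.image
            (fun i : Fin N => (⟨(f.1 i : ℕ) + (i : ℕ), by
              have := (f.1 i).isLt; have := i.isLt; omega⟩ : Fin (2 * N)))).card = N :=
          card_image_aux f.1 f.2 _ (fun i => rfl)
        have huniq := Finset.orderEmbOfFin_unique hcard
          (fun x => Finset.mem_image_of_mem _ (Finset.mem_univ x))
          (strictmono_aux f.1 f.2 _ (fun i => rfl))
        have h2 : ((Finset.univ.image
            (fun i : Fin N => (⟨(f.1 i : ℕ) + (i : ℕ), by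
              have := (f.1 i).isLt; have := i.isLt; omega⟩ : Fin (2 * N)))).orderEmbOfFin
                hcard i : ℕ) = (f.1 i : ℕ) + (i : ℕ) :=
          congrArg Fin.val (congrFun huniq i).symm
        apply Fin.ext
        show ((Finset.univ.image
            (fun i : Fin N => (⟨(f.1 i : ℕ) + (i : ℕ), by
              have := (f.1 i).isLt; have := i.isLt; omega⟩ : Fin (2 * N)))).orderEmbOfFin
                hcard i : ℕ) - (i : ℕ) = (f.1 i : ℕ)
        omega
      right_inv := fun s => Subtype.ext (image_eq_aux s.1 s.2 _ (fun i => rfl)) }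
  rw [Fintype.card_congr e, Fintype.card_finset_len, Fintype.card_fin]


/-- The number of pairs `(α, ω) ∈ Φ_{N,N}` whose associated parallelo-polyomino
has area `∑ₙ (U(n) − L(n)) = 2N+1` is the central binomial coefficient `C(2N, N)`. -/
theorem card_minimal_area_polyominoes (N : ℕ) :
    Nat.card {p : (Fin N → Fin (N + 2)) × (Fin N → Fin (N + 2)) //
        ((∀ a b, a ≤ b → p.1 a ≤ p.1 b) ∧ (∀ a b, a ≤ b → p.2 a ≤ p.2 b) ∧
          (∀ n, 1 ≤ (p.1 n : ℕ)) ∧ (∀ n, (p.2 n : ℕ) ≤ N) ∧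
          (∀ n, (p.1 n : ℕ) ≤ (p.2 n : ℕ) + 1)) ∧
        (∑ n : Fin (N + 1), (upperBorder p.2 n - lowerBorder p.1 n)) = 2 * N + 1}
      = Nat.choose (2 * N) N := by

  have e : {p : (Fin N → Fin (N + 2)) × (Fin N → Fin (N + 2)) //
        ((∀ a b, a ≤ b → p.1 a ≤ p.1 b) ∧ (∀ a b, a ≤ b → p.2 a ≤ p.2 b) ∧
          (∀ n, 1 ≤ (p.1 n : ℕ)) ∧ (∀ n, (p.2 n : ℕ) ≤ N) ∧
          (∀ n, (p.1 n : ℕ) ≤ (p.2 n : ℕ) + 1)) ∧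
        (∑ n : Fin (N + 1), (upperBorder p.2 n - lowerBorder p.1 n)) = 2 * N + 1}
      ≃ {f : Fin N → Fin (N + 1) // Monotone f} :=
    { toFun := fun p => ⟨fun n => ⟨(p.1.2 n : ℕ), by
          have := p.2.1.2.2.2.1 n; omega⟩,
        fun a b hab => by
          have := p.2.1.2.1 a b hab
          rw [Fin.le_def] at this
          exact Fin.mk_le_mk.mpr this⟩
      invFun := fun f => ⟨(fun n => ⟨(f.1 n : ℕ) + 1, by have := (f.1 n).isLt; omega⟩,
          fun n => ⟨(f.1 n : ℕ), by have := (f.1 n).isLt; omega⟩), by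
        refine ⟨⟨?_, ?_, ?_, ?_, ?_⟩, ?_⟩
        · intro a b hab
          have := f.2 hab
          rw [Fin.le_def] at this
          exact Fin.mk_le_mk.mpr (by omega)
        · intro a b hab
          have := f.2 hab
          rw [Fin.le_def] at this
          exact Fin.mk_le_mk.mpr this
        · intro n; show 1 ≤ (f.1 n : ℕ) + 1; omega
        · intro n; show (f.1 n : ℕ) ≤ N; have := (f.1 n).isLt; omega
        · intro n; show (f.1 n : ℕ) + 1 ≤ (f.1 n : ℕ) + 1; exact le_refl _
        · refine (area_char _ _ ?_ ?_ ?_).mpr (fun n => rfl)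
          · intro a b hab
            have := f.2 hab
            rw [Fin.le_def] at this
            exact Fin.mk_le_mk.mpr this
          · intro n; show 1 ≤ (f.1 n : ℕ) + 1; omega
          · intro n; show (f.1 n : ℕ) + 1 ≤ (f.1 n : ℕ) + 1; exact le_refl _⟩
      left_inv := fun p => by
        have hchar := (area_char p.1.1 p.1.2 p.2.1.2.1 p.2.1.2.2.1 p.2.1.2.2.2.2).mp p.2.2
        apply Subtype.ext
        apply Prod.ext
        · funext n
          apply Fin.ext
          show (p.1.2 n : ℕ) + 1 = (p.1.1 n : ℕ)
          exact (hchar n).symm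
        · funext n
          apply Fin.ext
          rfl
      right_inv := fun f => by
        apply Subtype.ext
        funext n
        apply Fin.ext
        rfl }
  rw [Nat.card_congr e, card_monotone_fin]
end
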